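/- arXiv:2104.13306 — 7 statements merged into one kernel-verified Lean document; each statement's English description precedes it below -/
import Mathlib

section
/- For every point x in the complement of K, the metric projection satisfies ⟪p_K(x) − x, p_K(x)⟫ < 0. -/
/-!
Testing the variational inequality `⟪x - p, w - p⟫ ≤ 0` of the projection `p` of `x` against
`w = t • (x - p)`, which lies in `K` for small `t > 0` because `0 ∈ interior K`, gives
`⟪x - p, p⟫ ≥ t * ‖x - p‖ ^ 2 > 0`.
-/

open scoped RealInnerProductSpace
open Filter Topology

theorem exists_pos_smul_mem_of_zero_mem_interior {F : Type*} [AddCommGroup F] [Module ℝ F]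
    [TopologicalSpace F] [ContinuousSMul ℝ F] {K : Set F} (h0 : 0 ∈ interior K) (v : F) :
    ∃ t : ℝ, 0 < t ∧ t • v ∈ K := by
  have hK : ∀ᶠ t : ℝ in 𝓝[>] 0, t • v ∈ K :=
    nhdsWithin_le_nhds <| ((continuous_id.smul continuous_const).tendsto' 0 0
      (zero_smul ℝ v)).eventually (mem_interior_iff_mem_nhds.mp h0)
  exact (hK.and self_mem_nhdsWithin).exists.imp fun _ ht => ⟨ht.2, ht.1⟩

section

variable {E : Type*} [NormedAddCommGroup E] [InnerProductSpace ℝ E]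

theorem real_inner_sub_le_zero_of_forall_dist_le {K : Set E} (hK : Convex ℝ K) {x p : E}
    (hp : p ∈ K) (hmin : ∀ y ∈ K, dist x p ≤ dist x y) :
    ∀ w ∈ K, ⟪x - p, w - p⟫ ≤ 0 := by
  have : Nonempty K := ⟨⟨p, hp⟩⟩
  refine (norm_eq_iInf_iff_real_inner_le_zero hK hp).mp (le_antisymm ?_ ?_)
  · exact le_ciInf fun w => by simpa only [dist_eq_norm] using hmin w w.2
  · exact ciInf_le ⟨0, Set.forall_mem_range.mpr fun _ => norm_nonneg _⟩ (⟨p, hp⟩ : K)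

theorem real_inner_sub_self_pos_of_zero_mem_interior {K : Set E} (hK : Convex ℝ K)
    (h0 : 0 ∈ interior K) {x p : E} (hp : p ∈ K) (hmin : ∀ y ∈ K, dist x p ≤ dist x y)
    (hx : x ∉ K) : 0 < ⟪x - p, p⟫ := by
  have hxp : 0 < ‖x - p‖ := norm_pos_iff.mpr (sub_ne_zero.mpr fun h => hx (h ▸ hp))
  obtain ⟨t, ht, htK⟩ := exists_pos_smul_mem_of_zero_mem_interior h0 (x - p)
  have hvar := real_inner_sub_le_zero_of_forall_dist_le hK hp hmin _ htK
  rw [inner_sub_right, real_inner_smul_right, real_inner_self_eq_norm_sq] at hvar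
  nlinarith [mul_pos ht (pow_pos hxp 2)]

end

theorem stmt_0_general {n : ℕ}
    (K : Set (EuclideanSpace ℝ (Fin n)))
    (hKconv : Convex ℝ K)
    (h0 : (0 : EuclideanSpace ℝ (Fin n)) ∈ interior K)
    (p : EuclideanSpace ℝ (Fin n) → EuclideanSpace ℝ (Fin n))
    (hpmem : ∀ x, p x ∈ K)
    (hpmin : ∀ x, ∀ y ∈ K, dist x (p x) ≤ dist x y)
    (x : EuclideanSpace ℝ (Fin n)) (hx : x ∉ K) :
    ⟪p x - x, p x⟫ < 0 := by
  have hpos := real_inner_sub_self_pos_of_zero_mem_interior hKconv h0 (hpmem x) (hpmin x) hx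
  rw [← neg_sub, inner_neg_left]
  exact neg_neg_of_pos hpos

/-- For every point `x` in the complement of `K`, the metric projection satisfies
`⟪p_K(x) − x, p_K(x)⟫ < 0`. -/
theorem stmt_0 {n : ℕ} (hn : 0 < n)
    (K : Set (EuclideanSpace ℝ (Fin n)))
    (hKcomp : IsCompact K) (hKconv : Convex ℝ K)
    (h0 : (0 : EuclideanSpace ℝ (Fin n)) ∈ interior K)
    (p : EuclideanSpace ℝ (Fin n) → EuclideanSpace ℝ (Fin n))
    (hpmem : ∀ x, p x ∈ K)
    (hpmin : ∀ x, ∀ y ∈ K, dist x (p x) ≤ dist x y)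
    (x : EuclideanSpace ℝ (Fin n)) (hx : x ∉ K) :
    ⟪p x - x, p x⟫ < 0 :=
  stmt_0_general K hKconv h0 p hpmem hpmin x hx
end

section
/- Let K₁ = K + closedBall(0,1) be the Minkowski sum of K and the closed unit ball. The map φ : frontier K₁ → N(K) given by φ(x) = (p_K(x), u_K(x)) is a homeomorphism onto the normal cycle N(K) (with the subspace topology of ℝ^n × ℝ^n), with continuous inverse ψ : N(K) → frontier K₁ given by ψ(x, ℓ) = x − (1/‖ℓ‖) • ℓ. In particular, N(K) is compact. -/
/-!
Write `p` for the nearest-point map of the convex set `K`. For `x ∉ K` the vector `p x - x` is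
normal to `K` at `p x`; conversely, if `ℓ` is normal to `K` at `x`, then `p (x - s • ℓ) = x`
for every `s ≥ 0`. Hence the frontier of `K + closedBall 0 1` is the level set
`‖x - p x‖ = 1`, and `x ↦ (p x, u x)` and `(x, ℓ) ↦ x - ℓ / ‖ℓ‖` are mutually inverse, each
merely rescaling the unit normal. The rescaling is fixed by `⟪u x, p x⟫ = -1`, possible since
`0 ∈ interior K` forces `⟪p x - x, p x⟫ < 0`; for compact `K` this normalisation is exactly
membership in the frontier of the polar. Compactness of `N(K)` follows, as it is the continuous
image of the compact frontier of `K + closedBall 0 1`.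
-/

open scoped RealInnerProductSpace Pointwise

open Filter Topology Metric Set

theorem eventually_nhdsGT_add_smul_mem {F : Type*} [AddCommGroup F] [TopologicalSpace F]
    [ContinuousAdd F] [Module ℝ F] [ContinuousSMul ℝ F] {U : Set F} {x : F} (hU : U ∈ 𝓝 x)
    (v : F) : ∀ᶠ t in 𝓝[>] (0 : ℝ), x + t • v ∈ U := by
  have : Tendsto (fun t : ℝ => x + t • v) (𝓝 0) (𝓝 x) :=
    (by fun_prop : Continuous fun t : ℝ => x + t • v).tendsto' 0 x (by simp)
  exact (this.mono_left nhdsWithin_le_nhds).eventually hU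

structure IsNearestPointMap {X : Type*} [PseudoMetricSpace X] (K : Set X) (p : X → X) :
    Prop where
  mem : ∀ x, p x ∈ K
  dist_le : ∀ x, ∀ y ∈ K, dist x (p x) ≤ dist x y

theorem IsNearestPointMap.apply_eq_self {X : Type*} [MetricSpace X] {K : Set X} {p : X → X}
    (hp : IsNearestPointMap K p) {x : X} (hx : x ∈ K) : p x = x := by
  have := hp.dist_le x x hx
  rw [dist_self] at this
  exact (dist_le_zero.1 this).symm

theorem IsNearestPointMap.mem_add_closedBall_iff {F : Type*} [SeminormedAddCommGroup F]
    {K : Set F} {p : F → F} (hp : IsNearestPointMap K p) {r : ℝ} {x : F} :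
    x ∈ K + closedBall 0 r ↔ ‖x - p x‖ ≤ r := by
  refine ⟨?_, fun h => ⟨p x, hp.mem x, x - p x, by simpa using h, add_sub_cancel _ _⟩⟩
  rintro ⟨k, hk, b, hb, rfl⟩
  calc ‖k + b - p (k + b)‖ = dist (k + b) (p (k + b)) := (dist_eq_norm _ _).symm
    _ ≤ dist (k + b) k := hp.dist_le _ k hk
    _ = ‖b‖ := by rw [dist_eq_norm, add_sub_cancel_left]
    _ ≤ r := by simpa using hb

variable {E : Type*} [NormedAddCommGroup E] [InnerProductSpace ℝ E] {K : Set E} {p : E → E}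

theorem inner_neg_of_forall_inner_sub_nonpos (h0 : (0 : E) ∈ interior K) {q ℓ : E}
    (hℓ : ℓ ≠ 0) (hnormal : ∀ y ∈ K, ⟪ℓ, q - y⟫ ≤ 0) : ⟪ℓ, q⟫ < 0 := by
  obtain ⟨t, htK, ht⟩ := ((eventually_nhdsGT_add_smul_mem
    (mem_interior_iff_mem_nhds.1 h0) (-ℓ)).and self_mem_nhdsWithin).exists
  have := hnormal _ htK
  rw [zero_add, inner_sub_right, real_inner_smul_right, inner_neg_right,
    real_inner_self_eq_norm_sq] at this
  nlinarith [mul_pos ht (pow_pos (norm_pos_iff.2 hℓ) 2)]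

theorem one_div_norm_smul_smul_of_neg {c : ℝ} (hc : c < 0) {v : E} (hv : ‖v‖ = 1) :
    (1 / ‖c • v‖) • (c • v) = -v := by
  rw [norm_smul, hv, mul_one, Real.norm_of_nonpos hc.le, smul_smul,
    show 1 / -c * c = -1 by rw [one_div, inv_neg, neg_mul, inv_mul_cancel₀ hc.ne],
    neg_one_smul]

namespace IsNearestPointMap

theorem inner_sub_nonpos (hp : IsNearestPointMap K p) (hK : Convex ℝ K) (x : E) {y : E}
    (hy : y ∈ K) : ⟪p x - x, p x - y⟫ ≤ 0 := by
  have : ‖x - p x‖ = ⨅ w : K, ‖x - w‖ := by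
    have : Nonempty K := ⟨⟨p x, hp.mem x⟩⟩
    refine le_antisymm (le_ciInf fun w => ?_)
      (ciInf_le (f := fun w : K => ‖x - w‖) ⟨0, ?_⟩ ⟨p x, hp.mem x⟩)
    · simpa only [dist_eq_norm] using hp.dist_le x w w.2
    · rintro _ ⟨w, rfl⟩
      exact norm_nonneg _
  rw [← neg_sub x, ← neg_sub y, inner_neg_neg]
  exact (norm_eq_iInf_iff_real_inner_le_zero hK (hp.mem x)).1 this y hy

theorem apply_eq_of_forall_inner_nonpos (hp : IsNearestPointMap K p) (hK : Convex ℝ K)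
    {x q : E} (hq : q ∈ K) (h : ∀ y ∈ K, ⟪q - x, q - y⟫ ≤ 0) : p x = q := by
  have h₁ := h (p x) (hp.mem x)
  have h₂ := hp.inner_sub_nonpos hK x hq
  have : ⟪p x - q, p x - q⟫ ≤ 0 := by
    have e : ⟪p x - q, p x - q⟫ = ⟪q - x, q - p x⟫ + ⟪p x - x, p x - q⟫ := by
      simp only [inner_sub_left, inner_sub_right, real_inner_comm]
      ring
    linarith
  exact sub_eq_zero.1 (real_inner_self_nonpos.1 this)

theorem lipschitzWith_one (hp : IsNearestPointMap K p) (hK : Convex ℝ K) :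
    LipschitzWith 1 p := by
  refine LipschitzWith.of_dist_le_mul fun x y => ?_
  have h₁ := hp.inner_sub_nonpos hK x (hp.mem y)
  have h₂ := hp.inner_sub_nonpos hK y (hp.mem x)
  have hfirm : ‖p x - p y‖ ^ 2 ≤ ⟪x - y, p x - p y⟫ := by
    have e : ⟪x - y, p x - p y⟫
        = ‖p x - p y‖ ^ 2 - ⟪p x - x, p x - p y⟫ - ⟪p y - y, p y - p x⟫ := by
      rw [← real_inner_self_eq_norm_sq]
      simp only [inner_sub_left, inner_sub_right, real_inner_comm]
      ring
    linarith
  have hcs := real_inner_le_norm (x - y) (p x - p y)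
  rw [NNReal.coe_one, one_mul, dist_eq_norm, dist_eq_norm]
  nlinarith [norm_nonneg (p x - p y), norm_nonneg (x - y)]

theorem apply_sub_smul_eq (hp : IsNearestPointMap K p) (hK : Convex ℝ K) {x ℓ : E}
    (hx : x ∈ K) (hℓ : ∀ y ∈ K, ⟪ℓ, x - y⟫ ≤ 0) {s : ℝ} (hs : 0 ≤ s) : p (x - s • ℓ) = x := by
  refine hp.apply_eq_of_forall_inner_nonpos hK hx fun y hy => ?_
  rw [sub_sub_cancel, real_inner_smul_left]
  exact mul_nonpos_of_nonneg_of_nonpos hs (hℓ y hy)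

theorem frontier_add_closedBall (hp : IsNearestPointMap K p) (hK : Convex ℝ K) {r : ℝ}
    (hr : 0 < r) : frontier (K + closedBall 0 r) = {x | ‖x - p x‖ = r} := by
  have hcont : Continuous fun x => ‖x - p x‖ :=
    (continuous_id.sub (hp.lipschitzWith_one hK).continuous).norm
  have hset : K + closedBall 0 r = {x | ‖x - p x‖ ≤ r} :=
    Set.ext fun _ => hp.mem_add_closedBall_iff
  rw [hset]
  refine (frontier_le_subset_eq hcont continuous_const).antisymm fun x hx => ?_
  rw [(isClosed_le hcont continuous_const).frontier_eq]
  refine ⟨le_of_eq hx, fun hint => ?_⟩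
  -- beyond `x` on the ray from `p x` the projection stays `p x`, so points there are too far
  obtain ⟨t, htmem, ht⟩ := ((eventually_nhdsGT_add_smul_mem
    (mem_interior_iff_mem_nhds.1 hint) (x - p x)).and self_mem_nhdsWithin).exists
  have hproj : p (x + t • (x - p x)) = p x := by
    rw [show x + t • (x - p x) = p x - (1 + t) • (p x - x) by module]
    exact hp.apply_sub_smul_eq hK (hp.mem x) (fun y hy => hp.inner_sub_nonpos hK x hy)
      (by linarith [ht])
  have hdist : ‖x + t • (x - p x) - p (x + t • (x - p x))‖ = (1 + t) * r := by
    rw [hproj, show x + t • (x - p x) - p x = (1 + t) • (x - p x) by module, norm_smul,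
      Real.norm_of_nonneg (by linarith [ht]), hx.out]
  have := htmem.out
  nlinarith [ht]

theorem apply_mem_frontier (hp : IsNearestPointMap K p) {x : E} (hx : x ∉ K) :
    p x ∈ frontier K := by
  refine ⟨subset_closure (hp.mem x), fun hint => ?_⟩
  obtain ⟨t, htK, ht⟩ := ((eventually_nhdsGT_add_smul_mem
    (mem_interior_iff_mem_nhds.1 hint) (x - p x)).and (Ioo_mem_nhdsGT one_pos)).exists
  have hpos : 0 < ‖x - p x‖ := norm_sub_pos_iff.2 fun h => hx (h ▸ hp.mem x)
  have := hp.dist_le x _ htK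
  rw [dist_eq_norm, dist_eq_norm,
    show x - (p x + t • (x - p x)) = (1 - t) • (x - p x) by module, norm_smul,
    Real.norm_of_nonneg (by linarith [ht.2])] at this
  nlinarith [ht.1]

theorem inner_sub_self_neg (hp : IsNearestPointMap K p) (hK : Convex ℝ K)
    (h0 : (0 : E) ∈ interior K) {x : E} (hx : x ∉ K) : ⟪p x - x, p x⟫ < 0 :=
  inner_neg_of_forall_inner_sub_nonpos h0 (sub_ne_zero.2 fun h => hx (h ▸ hp.mem x))
    fun _ hy => hp.inner_sub_nonpos hK x hy

end IsNearestPointMap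

def polarDual (K : Set E) : Set E := {ℓ | ∀ y ∈ K, -1 ≤ ⟪ℓ, y⟫}

theorem isClosed_polarDual (K : Set E) : IsClosed (polarDual K) := by
  simp only [polarDual, ofPred_forall]
  exact isClosed_biInter fun y _ =>
    isClosed_le continuous_const (continuous_id.inner continuous_const)

theorem mem_frontier_polarDual_iff (hK : IsCompact K) {ℓ : E} :
    ℓ ∈ frontier (polarDual K) ↔ ℓ ∈ polarDual K ∧ ∃ y ∈ K, ⟪ℓ, y⟫ = -1 := by
  rw [(isClosed_polarDual K).frontier_eq]
  refine and_congr_right fun hℓ => ⟨fun hint => ?_, ?_⟩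
  · by_contra! hne
    refine hint (mem_interior_iff_mem_nhds.2 ?_)
    -- strict inequalities on a compact set persist under small perturbations of `ℓ`
    have : ∀ᶠ ℓ' in 𝓝 ℓ, ∀ y ∈ K, -1 < ⟪ℓ', y⟫ :=
      hK.eventually_forall_of_forall_eventually fun y hy =>
        (isOpen_lt continuous_const continuous_inner).mem_nhds
          ((hℓ y hy).lt_of_ne (hne y hy).symm)
    filter_upwards [this] with ℓ' h y hy using (h y hy).le
  · rintro ⟨y, hy, hℓy⟩ hint
    have hy0 : y ≠ 0 := by
      rintro rfl
      simp at hℓy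
    obtain ⟨t, htP, ht⟩ := ((eventually_nhdsGT_add_smul_mem
      (mem_interior_iff_mem_nhds.1 hint) (-y)).and self_mem_nhdsWithin).exists
    have := htP y hy
    rw [inner_add_left, real_inner_smul_left, inner_neg_left, hℓy,
      real_inner_self_eq_norm_sq] at this
    nlinarith [mul_pos ht (pow_pos (norm_pos_iff.2 hy0) 2)]

def normalCycle (K : Set E) : Set (E × E) :=
  {z | z.1 ∈ frontier K ∧ z.2 ∈ frontier (polarDual K) ∧ ∀ x' ∈ K, ⟪z.2, z.1 - x'⟫ ≤ 0}

theorem mem_normalCycle_iff (hK : IsCompact K) {z : E × E} :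
    z ∈ normalCycle K ↔ z.1 ∈ frontier K ∧ ⟪z.2, z.1⟫ = -1 ∧ ∀ y ∈ K, ⟪z.2, z.1 - y⟫ ≤ 0 := by
  have hfr : frontier K ⊆ K := hK.isClosed.frontier_subset
  simp only [normalCycle, mem_ofPred_eq, mem_frontier_polarDual_iff hK]
  constructor
  · rintro ⟨hx, ⟨hℓ, y, hy, hℓy⟩, hnormal⟩
    refine ⟨hx, le_antisymm ?_ (hℓ _ (hfr hx)), hnormal⟩
    have := hnormal y hy
    rw [inner_sub_right, hℓy] at this
    linarith
  · rintro ⟨hx, hℓx, hnormal⟩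
    refine ⟨hx, ⟨fun y hy => ?_, z.1, hfr hx, hℓx⟩, hnormal⟩
    have := hnormal y hy
    rw [inner_sub_right, hℓx] at this
    linarith

theorem ne_zero_of_mem_normalCycle (hK : IsCompact K) {z : E × E}
    (hz : z ∈ normalCycle K) : z.2 ≠ 0 := by
  intro h
  have := ((mem_normalCycle_iff hK).1 hz).2.1
  simp [h] at this

noncomputable def toNormalCycle (p : E → E) (x : E) : E × E :=
  (p x, (1 / ⟪p x - x, p x⟫) • (x - p x))

noncomputable def ofNormalCycle (z : E × E) : E := z.1 - (1 / ‖z.2‖) • z.2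

theorem toNormalCycle_mem (hp : IsNearestPointMap K p) (hKc : IsCompact K) (hK : Convex ℝ K)
    (h0 : (0 : E) ∈ interior K) {x : E} (hx : x ∉ K) : toNormalCycle p x ∈ normalCycle K := by
  have hneg := hp.inner_sub_self_neg hK h0 hx
  have hu : (1 / ⟪p x - x, p x⟫) • (x - p x) = -((1 / ⟪p x - x, p x⟫) • (p x - x)) := by
    rw [← smul_neg, neg_sub]
  rw [mem_normalCycle_iff hKc]
  refine ⟨hp.apply_mem_frontier hx, ?_, fun y hy => ?_⟩ <;>
    simp only [toNormalCycle, hu, inner_neg_left, real_inner_smul_left]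
  · rw [one_div_mul_cancel hneg.ne]
  · exact neg_nonpos.2 (mul_nonneg_of_nonpos_of_nonpos (one_div_neg.2 hneg).le
      (hp.inner_sub_nonpos hK x hy))

theorem continuousOn_toNormalCycle (hp : IsNearestPointMap K p) (hK : Convex ℝ K)
    (h0 : (0 : E) ∈ interior K) : ContinuousOn (toNormalCycle p) Kᶜ := by
  have hpc := (hp.lipschitzWith_one hK).continuous
  exact hpc.continuousOn.prodMk (ContinuousOn.smul (continuousOn_const.div (by fun_prop)
    fun x hx => (hp.inner_sub_self_neg hK h0 hx).ne) (by fun_prop))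

theorem ofNormalCycle_toNormalCycle (hp : IsNearestPointMap K p) (hK : Convex ℝ K)
    (h0 : (0 : E) ∈ interior K) {x : E} (hx : ‖x - p x‖ = 1) :
    ofNormalCycle (toNormalCycle p x) = x := by
  have hxK : x ∉ K := fun hxK => by simp [hp.apply_eq_self hxK] at hx
  dsimp only [ofNormalCycle, toNormalCycle]
  rw [one_div_norm_smul_smul_of_neg (one_div_neg.2 (hp.inner_sub_self_neg hK h0 hxK)) hx,
    sub_neg_eq_add, add_sub_cancel]

theorem IsNearestPointMap.apply_ofNormalCycle (hp : IsNearestPointMap K p)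
    (hKc : IsCompact K) (hK : Convex ℝ K) {z : E × E} (hz : z ∈ normalCycle K) :
    p (ofNormalCycle z) = z.1 := by
  rw [mem_normalCycle_iff hKc] at hz
  exact hp.apply_sub_smul_eq hK (hKc.isClosed.frontier_subset hz.1) hz.2.2 (by positivity)

theorem norm_ofNormalCycle_sub_apply (hp : IsNearestPointMap K p) (hKc : IsCompact K)
    (hK : Convex ℝ K) {z : E × E} (hz : z ∈ normalCycle K) :
    ‖ofNormalCycle z - p (ofNormalCycle z)‖ = 1 := by
  rw [hp.apply_ofNormalCycle hKc hK hz, ofNormalCycle, sub_sub_cancel_left, norm_neg, one_div]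
  exact norm_smul_inv_norm (ne_zero_of_mem_normalCycle hKc hz)

theorem toNormalCycle_ofNormalCycle (hp : IsNearestPointMap K p) (hKc : IsCompact K)
    (hK : Convex ℝ K) {z : E × E} (hz : z ∈ normalCycle K) :
    toNormalCycle p (ofNormalCycle z) = z := by
  have hℓx := ((mem_normalCycle_iff hKc).1 hz).2.1
  have hℓ := norm_pos_iff.2 (ne_zero_of_mem_normalCycle hKc hz)
  rw [toNormalCycle, hp.apply_ofNormalCycle hKc hK hz]
  refine Prod.ext rfl ?_
  rw [ofNormalCycle, sub_sub_cancel, sub_sub_cancel_left, real_inner_smul_left, hℓx, smul_neg,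
    smul_smul, ← neg_smul]
  convert one_smul ℝ z.2
  field_simp

theorem continuousOn_ofNormalCycle (hK : IsCompact K) :
    ContinuousOn ofNormalCycle (normalCycle K) :=
  continuous_fst.continuousOn.sub (ContinuousOn.smul (continuousOn_const.div
    continuous_snd.norm.continuousOn fun _ hz => norm_ne_zero_iff.2
      (ne_zero_of_mem_normalCycle hK hz)) continuous_snd.continuousOn)

theorem stmt_4_general {n : ℕ}
    (K : Set (EuclideanSpace ℝ (Fin n)))
    (hKcomp : IsCompact K) (hKconv : Convex ℝ K)
    (h0 : (0 : EuclideanSpace ℝ (Fin n)) ∈ interior K)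
    (p : EuclideanSpace ℝ (Fin n) → EuclideanSpace ℝ (Fin n))
    (hpmem : ∀ x, p x ∈ K)
    (hpmin : ∀ x, ∀ y ∈ K, dist x (p x) ≤ dist x y)
    (K₁ : Set (EuclideanSpace ℝ (Fin n)))
    (hK₁ : K₁ = K + Metric.closedBall (0 : EuclideanSpace ℝ (Fin n)) 1)
    (NK : Set (EuclideanSpace ℝ (Fin n) × EuclideanSpace ℝ (Fin n)))
    (hNK : NK = {z | z.1 ∈ frontier K ∧
        z.2 ∈ frontier {ℓ : EuclideanSpace ℝ (Fin n) | ∀ y ∈ K, -1 ≤ ⟪ℓ, y⟫} ∧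
        ∀ x' ∈ K, ⟪z.2, z.1 - x'⟫ ≤ 0})
    (φ : EuclideanSpace ℝ (Fin n) → EuclideanSpace ℝ (Fin n) × EuclideanSpace ℝ (Fin n))
    (hφ : φ = fun x => (p x, (1 / ⟪p x - x, p x⟫) • (x - p x)))
    (ψ : EuclideanSpace ℝ (Fin n) × EuclideanSpace ℝ (Fin n) → EuclideanSpace ℝ (Fin n))
    (hψ : ψ = fun z => z.1 - (1 / ‖z.2‖) • z.2) :
    (∀ x ∈ frontier K₁, φ x ∈ NK) ∧ ContinuousOn φ (frontier K₁) ∧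
      (∀ z ∈ NK, ψ z ∈ frontier K₁) ∧ ContinuousOn ψ NK ∧
      (∀ x ∈ frontier K₁, ψ (φ x) = x) ∧ (∀ z ∈ NK, φ (ψ z) = z) ∧
      IsCompact NK := by
  have hp : IsNearestPointMap K p := ⟨hpmem, hpmin⟩
  obtain rfl : NK = normalCycle K := hNK
  obtain rfl : φ = toNormalCycle p := hφ
  obtain rfl : ψ = ofNormalCycle := hψ
  have hfr (x) : x ∈ frontier K₁ ↔ ‖x - p x‖ = 1 := by
    rw [hK₁, hp.frontier_add_closedBall hKconv one_pos]
    rfl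
  have hout : frontier K₁ ⊆ Kᶜ := fun x hx hxK => by
    rw [hfr, hp.apply_eq_self hxK, sub_self, norm_zero] at hx
    exact zero_ne_one hx
  have hmaps : MapsTo (toNormalCycle p) (frontier K₁) (normalCycle K) := fun x hx =>
    toNormalCycle_mem hp hKcomp hKconv h0 (hout hx)
  have hmaps' : MapsTo ofNormalCycle (normalCycle K) (frontier K₁) := fun z hz =>
    (hfr _).2 (norm_ofNormalCycle_sub_apply hp hKcomp hKconv hz)
  have hinv : InvOn ofNormalCycle (toNormalCycle p) (frontier K₁) (normalCycle K) :=
    ⟨fun x hx => ofNormalCycle_toNormalCycle hp hKconv h0 ((hfr x).1 hx),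
      fun z hz => toNormalCycle_ofNormalCycle hp hKcomp hKconv hz⟩
  have hcont := (continuousOn_toNormalCycle hp hKconv h0).mono hout
  have hK₁comp : IsCompact K₁ := hK₁ ▸ hKcomp.add (isCompact_closedBall 0 1)
  have hfrcomp : IsCompact (frontier K₁) :=
    hK₁comp.of_isClosed_subset isClosed_frontier hK₁comp.isClosed.frontier_subset
  refine ⟨hmaps, hcont, hmaps', continuousOn_ofNormalCycle hKcomp, hinv.1, hinv.2, ?_⟩
  rw [← (hinv.bijOn hmaps hmaps').image_eq]
  exact hfrcomp.image_of_continuousOn hcont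

/-- The map `φ : frontier K₁ → N(K)`, `x ↦ (p_K(x), u_K(x))`, is a homeomorphism onto the
normal cycle `N(K)` with continuous inverse `ψ(x, ℓ) = x − (1/‖ℓ‖) • ℓ`. In particular,
`N(K)` is compact. -/
theorem stmt_4 {n : ℕ} (hn : 0 < n)
    (K : Set (EuclideanSpace ℝ (Fin n)))
    (hKcomp : IsCompact K) (hKconv : Convex ℝ K)
    (h0 : (0 : EuclideanSpace ℝ (Fin n)) ∈ interior K)
    (p : EuclideanSpace ℝ (Fin n) → EuclideanSpace ℝ (Fin n))
    (hpmem : ∀ x, p x ∈ K)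
    (hpmin : ∀ x, ∀ y ∈ K, dist x (p x) ≤ dist x y)
    (K₁ : Set (EuclideanSpace ℝ (Fin n)))
    (hK₁ : K₁ = K + Metric.closedBall (0 : EuclideanSpace ℝ (Fin n)) 1)
    (NK : Set (EuclideanSpace ℝ (Fin n) × EuclideanSpace ℝ (Fin n)))
    (hNK : NK = {z | z.1 ∈ frontier K ∧
        z.2 ∈ frontier {ℓ : EuclideanSpace ℝ (Fin n) | ∀ y ∈ K, -1 ≤ ⟪ℓ, y⟫} ∧
        ∀ x' ∈ K, ⟪z.2, z.1 - x'⟫ ≤ 0})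
    (φ : EuclideanSpace ℝ (Fin n) → EuclideanSpace ℝ (Fin n) × EuclideanSpace ℝ (Fin n))
    (hφ : φ = fun x => (p x, (1 / ⟪p x - x, p x⟫) • (x - p x)))
    (ψ : EuclideanSpace ℝ (Fin n) × EuclideanSpace ℝ (Fin n) → EuclideanSpace ℝ (Fin n))
    (hψ : ψ = fun z => z.1 - (1 / ‖z.2‖) • z.2) :
    (∀ x ∈ frontier K₁, φ x ∈ NK) ∧ ContinuousOn φ (frontier K₁) ∧
      (∀ z ∈ NK, ψ z ∈ frontier K₁) ∧ ContinuousOn ψ NK ∧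
      (∀ x ∈ frontier K₁, ψ (φ x) = x) ∧ (∀ z ∈ NK, φ (ψ z) = z) ∧
      IsCompact NK :=
  stmt_4_general K hKcomp hKconv h0 p hpmem hpmin K₁ hK₁ NK hNK φ hφ ψ hψ
end

section
/- If ℓ ∈ frontier K°, then the minimum of y ↦ ⟪ℓ, y⟫ over K is attained and equals −1. Consequently, for every (x, ℓ) ∈ N(K) one has ⟪ℓ, x⟫ = −1. -/
open scoped RealInnerProductSpace

/-!
The polar set `{ℓ | ∀ y ∈ K, -1 ≤ ⟪ℓ, y⟫}` is closed, and by the tube lemma for the compact set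
`K` its subset `{ℓ | ∀ y ∈ K, -1 < ⟪ℓ, y⟫}` is open. So a frontier point `ℓ` of the polar set
lies in it but not in the open subset: some `y ∈ K` has `⟪ℓ, y⟫ = -1`, which is then the minimum.
For `(x, ℓ)` in the normal cycle, `x` minimizes `⟪ℓ, ·⟫` over `K`, so `⟪ℓ, x⟫ = -1`.
-/

section Polar

variable {E : Type*} [NormedAddCommGroup E] [InnerProductSpace ℝ E] {K : Set E}

theorem isClosed_setOf_forall_le_inner (K : Set E) (c : ℝ) :
    IsClosed {ℓ : E | ∀ y ∈ K, c ≤ ⟪ℓ, y⟫} := by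
  simp only [Set.ofPred_forall]
  exact isClosed_biInter fun _ _ =>
    isClosed_le continuous_const (continuous_id.inner continuous_const)

theorem IsCompact.isOpen_setOf_forall_lt_inner (hK : IsCompact K) (c : ℝ) :
    IsOpen {ℓ : E | ∀ y ∈ K, c < ⟪ℓ, y⟫} :=
  isOpen_iff_mem_nhds.mpr fun _ hℓ =>
    hK.eventually_forall_of_forall_eventually fun y hy =>
      (continuous_inner.tendsto _).eventually (lt_mem_nhds (hℓ y hy))

theorem IsCompact.exists_inner_eq_of_mem_frontier (hK : IsCompact K) {c : ℝ} {ℓ : E}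
    (hℓ : ℓ ∈ frontier {ℓ : E | ∀ y ∈ K, c ≤ ⟪ℓ, y⟫}) : ∃ y ∈ K, ⟪ℓ, y⟫ = c := by
  have hle : ∀ y ∈ K, c ≤ ⟪ℓ, y⟫ := (isClosed_setOf_forall_le_inner K c).frontier_subset hℓ
  by_contra! hne
  have hlt : ℓ ∈ {ℓ : E | ∀ y ∈ K, c < ⟪ℓ, y⟫} := fun y hy => (hle y hy).lt_of_ne (hne y hy).symm
  exact hℓ.2 <| interior_maximal (fun _ h y hy => (h y hy).le)
    (hK.isOpen_setOf_forall_lt_inner c) hlt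

theorem IsCompact.isLeast_inner_of_mem_frontier (hK : IsCompact K) {c : ℝ} {ℓ : E}
    (hℓ : ℓ ∈ frontier {ℓ : E | ∀ y ∈ K, c ≤ ⟪ℓ, y⟫}) :
    IsLeast {r : ℝ | ∃ y ∈ K, ⟪ℓ, y⟫ = r} c :=
  ⟨hK.exists_inner_eq_of_mem_frontier hℓ, fun _ ⟨y, hy, hr⟩ =>
    hr ▸ (isClosed_setOf_forall_le_inner K c).frontier_subset hℓ y hy⟩

end Polar

theorem stmt_7_general {n : ℕ}
    (K : Set (EuclideanSpace ℝ (Fin n)))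
    (hKcomp : IsCompact K)
    (Kpolar : Set (EuclideanSpace ℝ (Fin n)))
    (hKpolar : Kpolar = {ℓ : EuclideanSpace ℝ (Fin n) | ∀ y ∈ K, -1 ≤ ⟪ℓ, y⟫})
    (NK : Set (EuclideanSpace ℝ (Fin n) × EuclideanSpace ℝ (Fin n)))
    (hNK : NK = {z | z.1 ∈ frontier K ∧ z.2 ∈ frontier Kpolar ∧
        ∀ x' ∈ K, ⟪z.2, z.1 - x'⟫ ≤ 0}) :
    (∀ ℓ ∈ frontier Kpolar,
        IsLeast {r : ℝ | ∃ y ∈ K, ⟪ℓ, y⟫ = r} (-1)) ∧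
      ∀ x ℓ : EuclideanSpace ℝ (Fin n), (x, ℓ) ∈ NK → ⟪ℓ, x⟫ = -1 := by
  have hleast : ∀ ℓ ∈ frontier Kpolar, IsLeast {r : ℝ | ∃ y ∈ K, ⟪ℓ, y⟫ = r} (-1) :=
    fun _ hℓ => hKcomp.isLeast_inner_of_mem_frontier (hKpolar ▸ hℓ)
  subst hNK
  refine ⟨hleast, fun x ℓ ⟨hx, hℓ, hsupport⟩ => ?_⟩
  obtain ⟨⟨y₀, hy₀, hy₀ℓ⟩, hlower⟩ := hleast ℓ hℓ
  have hxK : x ∈ K := hKcomp.isClosed.frontier_subset hx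
  have hxy₀ := hsupport y₀ hy₀
  rw [inner_sub_right] at hxy₀
  linarith [hlower ⟨x, hxK, rfl⟩]

/-- If `ℓ ∈ frontier K°`, then the minimum of `y ↦ ⟪ℓ, y⟫` over `K` is attained and equals
`−1`. Consequently, for every `(x, ℓ) ∈ N(K)` one has `⟪ℓ, x⟫ = −1`. -/
theorem stmt_7 {n : ℕ} (hn : 0 < n)
    (K : Set (EuclideanSpace ℝ (Fin n)))
    (hKcomp : IsCompact K) (hKconv : Convex ℝ K)
    (h0 : (0 : EuclideanSpace ℝ (Fin n)) ∈ interior K)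
    (Kpolar : Set (EuclideanSpace ℝ (Fin n)))
    (hKpolar : Kpolar = {ℓ : EuclideanSpace ℝ (Fin n) | ∀ y ∈ K, -1 ≤ ⟪ℓ, y⟫})
    (NK : Set (EuclideanSpace ℝ (Fin n) × EuclideanSpace ℝ (Fin n)))
    (hNK : NK = {z | z.1 ∈ frontier K ∧ z.2 ∈ frontier Kpolar ∧
        ∀ x' ∈ K, ⟪z.2, z.1 - x'⟫ ≤ 0}) :
    (∀ ℓ ∈ frontier Kpolar,
        IsLeast {r : ℝ | ∃ y ∈ K, ⟪ℓ, y⟫ = r} (-1)) ∧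
      ∀ x ℓ : EuclideanSpace ℝ (Fin n), (x, ℓ) ∈ NK → ⟪ℓ, x⟫ = -1 :=
  stmt_7_general K hKcomp Kpolar hKpolar NK hNK
end

section
/- The normal cycle of K is self-dual: for all x, ℓ ∈ ℝ^n, (x, ℓ) ∈ N(K) if and only if (ℓ, x) ∈ N(K°), where N(K°) = {(ℓ, m) ∈ frontier K° × frontier (K°)° : ⟪m, ℓ − ℓ'⟫ ≤ 0 for all ℓ' ∈ K°}. -/
/-!
If `⟪ℓ, ·⟫` attains its minimum over `K` at `x` and `ℓ` lies on the frontier of `K°`, then the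
minimum is exactly `-1`: were it larger, boundedness of `K` would keep `⟪ℓ', ·⟫ > -1` on `K` for
all `ℓ'` near `ℓ`, putting `ℓ` in the interior of `K°`. Since `x ∈ K` gives `⟪ℓ', x⟫ ≥ -1` for every
`ℓ' ∈ K°`, the same `x` is then an outer normal of `K°` at `ℓ`. The argument is symmetric in
`(K, K°)` and `(K°, K°°)`, because `K°` is bounded when `0 ∈ interior K` and `K°° = K` by
Hahn–Banach.
-/

open scoped RealInnerProductSpace
open Metric Bornology

variable {E : Type*} [NormedAddCommGroup E] [InnerProductSpace ℝ E]

def polar (K : Set E) : Set E := {ℓ | ∀ y ∈ K, -1 ≤ ⟪ℓ, y⟫}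

theorem isClosed_polar (K : Set E) : IsClosed (polar K) := by
  simp only [polar, Set.ofPred_forall]
  exact isClosed_biInter fun y _ =>
    isClosed_le continuous_const (continuous_id.inner continuous_const)

theorem isBounded_polar {K : Set E} (h0 : (0 : E) ∈ interior K) : IsBounded (polar K) := by
  obtain ⟨ε, hε, hball⟩ := Metric.mem_nhds_iff.1 (mem_interior_iff_mem_nhds.1 h0)
  refine (isBounded_closedBall (x := (0 : E)) (r := 2 / ε)).subset fun ℓ hℓ => ?_
  rw [mem_closedBall_zero_iff, le_div_iff₀ hε]
  rcases eq_or_ne ℓ 0 with rfl | hℓ0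
  · simp
  have hnorm : 0 < ‖ℓ‖ := norm_pos_iff.2 hℓ0
  have hy : (-(ε / 2) / ‖ℓ‖) • ℓ ∈ K := by
    refine hball (mem_ball_zero_iff.2 ?_)
    rw [norm_smul, Real.norm_eq_abs, abs_div, abs_neg, abs_of_pos (half_pos hε), abs_norm,
      div_mul_cancel₀ _ hnorm.ne']
    exact half_lt_self hε
  have h := hℓ _ hy
  rw [real_inner_smul_right, real_inner_self_eq_norm_sq] at h
  have : -(ε / 2) / ‖ℓ‖ * ‖ℓ‖ ^ 2 = -(ε / 2) * ‖ℓ‖ := by field_simp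
  linarith

theorem mem_interior_polar {A : Set E} (hA : IsBounded A) {q : E} {c : ℝ} (hc : -1 < c)
    (hq : ∀ p ∈ A, c ≤ ⟪q, p⟫) : q ∈ interior (polar A) := by
  obtain ⟨R, hR, hAR⟩ := hA.subset_closedBall_lt 0 0
  refine mem_interior_iff_mem_nhds.2 (Metric.mem_nhds_iff.2
    ⟨(c + 1) / R, div_pos (by linarith) hR, fun q' hq' p hp => ?_⟩)
  have hdist : ‖q' - q‖ * R < c + 1 := by
    rw [← lt_div_iff₀ hR, ← dist_eq_norm]; exact hq'
  have hpR : ‖p‖ ≤ R := mem_closedBall_zero_iff.1 (hAR hp)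
  have hperturb : -(‖q' - q‖ * ‖p‖) ≤ ⟪q' - q, p⟫ :=
    neg_le_of_abs_le (abs_real_inner_le_norm _ _)
  have : ‖q' - q‖ * ‖p‖ ≤ ‖q' - q‖ * R := mul_le_mul_of_nonneg_left hpR (norm_nonneg _)
  have hsplit : ⟪q', p⟫ = ⟪q, p⟫ + ⟪q' - q, p⟫ := by rw [inner_sub_left]; ring
  linarith [hq p hp]

theorem inner_eq_neg_one_of_mem_frontier_polar {A : Set E} (hA : IsBounded A) {p q : E}
    (hp : p ∈ A) (hq : q ∈ frontier (polar A)) (hmin : ∀ p' ∈ A, ⟪q, p⟫ ≤ ⟪q, p'⟫) :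
    ⟪q, p⟫ = -1 :=
  le_antisymm (not_lt.1 fun hlt => hq.2 (mem_interior_polar hA hlt hmin))
    ((isClosed_polar A).frontier_subset hq p hp)

theorem polar_normal_of_normal {A : Set E} (hA : IsBounded A) {p q : E} (hp : p ∈ A)
    (hq : q ∈ frontier (polar A)) (hnormal : ∀ p' ∈ A, ⟪q, p - p'⟫ ≤ 0) :
    ∀ q' ∈ polar A, ⟪p, q - q'⟫ ≤ 0 := by
  have heq : ⟪q, p⟫ = -1 := inner_eq_neg_one_of_mem_frontier_polar hA hp hq fun p' hp' => by
    have := hnormal p' hp'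
    rw [inner_sub_right] at this
    linarith
  intro q' hq'
  rw [inner_sub_right, real_inner_comm q p, real_inner_comm q' p, heq]
  linarith [hq' p hp]

theorem polar_polar [CompleteSpace E] {K : Set E} (hKcl : IsClosed K) (hKconv : Convex ℝ K)
    (h0 : (0 : E) ∈ K) : polar (polar K) = K := by
  refine Set.Subset.antisymm (fun x hx => ?_) fun y hy ℓ hℓ => real_inner_comm ℓ y ▸ hℓ y hy
  by_contra hxK
  obtain ⟨f, u, hfK, hfx⟩ := geometric_hahn_banach_closed_point hKconv hKcl hxK
  have hu : 0 < u := by simpa using hfK 0 h0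
  set ℓ := (InnerProductSpace.toDual ℝ E).symm f
  have hℓ : ∀ y, ⟪ℓ, y⟫ = f y := fun y => InnerProductSpace.toDual_symm_apply
  have hmem : (-u⁻¹) • ℓ ∈ polar K := fun y hy => by
    rw [real_inner_smul_left, hℓ, neg_mul, neg_le_neg_iff, inv_mul_le_one₀ hu]
    exact (hfK y hy).le
  have := hx _ hmem
  rw [real_inner_smul_right, real_inner_comm, hℓ, neg_mul, neg_le_neg_iff,
    inv_mul_le_one₀ hu] at this
  linarith

theorem stmt_9_general {n : ℕ}
    (K : Set (EuclideanSpace ℝ (Fin n)))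
    (hKcomp : IsCompact K) (hKconv : Convex ℝ K)
    (h0 : (0 : EuclideanSpace ℝ (Fin n)) ∈ interior K)
    (Kpolar : Set (EuclideanSpace ℝ (Fin n)))
    (hKpolar : Kpolar = {ℓ : EuclideanSpace ℝ (Fin n) | ∀ y ∈ K, -1 ≤ ⟪ℓ, y⟫})
    (Kbipolar : Set (EuclideanSpace ℝ (Fin n)))
    (hKbipolar : Kbipolar = {m : EuclideanSpace ℝ (Fin n) | ∀ ℓ ∈ Kpolar, -1 ≤ ⟪m, ℓ⟫})
    (x ℓ : EuclideanSpace ℝ (Fin n)) :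
    (x ∈ frontier K ∧ ℓ ∈ frontier Kpolar ∧ ∀ x' ∈ K, ⟪ℓ, x - x'⟫ ≤ 0) ↔
      (ℓ ∈ frontier Kpolar ∧ x ∈ frontier Kbipolar ∧ ∀ ℓ' ∈ Kpolar, ⟪x, ℓ - ℓ'⟫ ≤ 0) := by
  obtain rfl : Kpolar = polar K := hKpolar
  obtain rfl : Kbipolar = polar (polar K) := hKbipolar
  have hbip : polar (polar K) = K := polar_polar hKcomp.isClosed hKconv (interior_subset h0)
  refine ⟨fun ⟨hx, hℓ, hnormal⟩ => ⟨hℓ, hbip.symm ▸ hx, ?_⟩, fun ⟨hℓ, hx, hnormal⟩ => ?_⟩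
  · exact polar_normal_of_normal hKcomp.isBounded (hKcomp.isClosed.frontier_subset hx) hℓ hnormal
  · have := polar_normal_of_normal (isBounded_polar h0) ((isClosed_polar K).frontier_subset hℓ)
      hx hnormal
    rw [hbip] at hx this
    exact ⟨hx, hℓ, this⟩

/-- The normal cycle of `K` is self-dual: `(x, ℓ) ∈ N(K)` iff `(ℓ, x) ∈ N(K°)`. -/
theorem stmt_9 {n : ℕ} (hn : 0 < n)
    (K : Set (EuclideanSpace ℝ (Fin n)))
    (hKcomp : IsCompact K) (hKconv : Convex ℝ K)
    (h0 : (0 : EuclideanSpace ℝ (Fin n)) ∈ interior K)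
    (Kpolar : Set (EuclideanSpace ℝ (Fin n)))
    (hKpolar : Kpolar = {ℓ : EuclideanSpace ℝ (Fin n) | ∀ y ∈ K, -1 ≤ ⟪ℓ, y⟫})
    (Kbipolar : Set (EuclideanSpace ℝ (Fin n)))
    (hKbipolar : Kbipolar = {m : EuclideanSpace ℝ (Fin n) | ∀ ℓ ∈ Kpolar, -1 ≤ ⟪m, ℓ⟫})
    (x ℓ : EuclideanSpace ℝ (Fin n)) :
    (x ∈ frontier K ∧ ℓ ∈ frontier Kpolar ∧ ∀ x' ∈ K, ⟪ℓ, x - x'⟫ ≤ 0) ↔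
      (ℓ ∈ frontier Kpolar ∧ x ∈ frontier Kbipolar ∧ ∀ ℓ' ∈ Kpolar, ⟪x, ℓ - ℓ'⟫ ≤ 0) :=
  stmt_9_general K hKcomp hKconv h0 Kpolar hKpolar Kbipolar hKbipolar x ℓ
end

section
/- Let A ⊆ ℝ^n be a closed set and let x be a point in the frontier of the interior of A. Let f : ℝ^n → ℝ be a polynomial function whose gradient ∇f(x) is nonzero, and suppose there exists an open set U containing x such that frontier A ∩ U ⊆ {y ∈ ℝ^n : f(y) = 0}. Then there exists an open set V with x ∈ V ⊆ U such that frontier A ∩ V = {y ∈ V : f(y) = 0}; moreover, after replacing f by −f if necessary, A ∩ V = {y ∈ V : f(y) ≥ 0}. -/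
/-!
Near a point where `∇f ≠ 0`, the implicit function theorem straightens `f` into the first
coordinate of `ℝ × ker (Df)`, so a small neighbourhood `V` of `x` is split by `f` into two
preconnected sign regions, each accumulating at every zero of `f` in `V`. Each region misses
`frontier A`, hence lies in `interior A` or in `Aᶜ`. They cannot both lie in `interior A`, since
then `V ⊆ A` and `x` would be interior, nor both in `Aᶜ`, since `V` meets `interior A`. So one
region is `interior A ∩ V`, the other `V \ A`, and the zeros of `f` form the common boundary.
-/

open Set Filter Topology
open scoped Gradient

section Topology

variable {X Y : Type*} [TopologicalSpace X] [TopologicalSpace Y]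

theorem IsPreconnected.subset_interior_or_subset_compl {A S : Set X} (hA : IsClosed A)
    (hS : IsPreconnected S) (hSA : Disjoint S (frontier A)) : S ⊆ interior A ∨ S ⊆ Aᶜ := by
  refine hS.subset_or_subset isOpen_interior hA.isOpen_compl
    (disjoint_compl_right.mono_left interior_subset) fun y hy => ?_
  by_cases hyA : y ∈ A
  · left
    by_contra hyi
    exact hSA.notMem_of_mem_left hy (hA.frontier_eq ▸ ⟨hyA, hyi⟩)
  · exact .inr hyA

structure IsSignSplitting (f : X → ℝ) (V : Set X) : Prop where
  isOpen : IsOpen V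
  isPreconnected_pos : IsPreconnected {y ∈ V | 0 < f y}
  isPreconnected_neg : IsPreconnected {y ∈ V | f y < 0}
  zeros_subset_closure_pos : {y ∈ V | f y = 0} ⊆ closure {y ∈ V | 0 < f y}
  zeros_subset_closure_neg : {y ∈ V | f y = 0} ⊆ closure {y ∈ V | f y < 0}

namespace IsSignSplitting

variable {f : X → ℝ} {V A : Set X}

theorem neg (h : IsSignSplitting f V) : IsSignSplitting (-f) V where
  isOpen := h.isOpen
  isPreconnected_pos := by simpa only [Pi.neg_apply, neg_pos] using h.isPreconnected_neg
  isPreconnected_neg := by simpa only [Pi.neg_apply, neg_lt_zero] using h.isPreconnected_pos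
  zeros_subset_closure_pos := by
    simpa only [Pi.neg_apply, neg_pos, neg_eq_zero] using h.zeros_subset_closure_neg
  zeros_subset_closure_neg := by
    simpa only [Pi.neg_apply, neg_lt_zero, neg_eq_zero] using h.zeros_subset_closure_pos

theorem subset_closure_ne_zero (h : IsSignSplitting f V) : V ⊆ closure {y ∈ V | f y ≠ 0} := by
  intro y hyV
  by_cases hy : f y = 0
  · exact closure_mono (t := {y ∈ V | f y ≠ 0}) (fun z hz => ⟨hz.1, hz.2.ne'⟩)
      (h.zeros_subset_closure_pos ⟨hyV, hy⟩)
  · exact subset_closure ⟨hyV, hy⟩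

theorem frontier_inter_eq_and_inter_eq (h : IsSignSplitting f V) (hA : IsClosed A)
    (hpos : {y ∈ V | 0 < f y} ⊆ interior A) (hneg : {y ∈ V | f y < 0} ⊆ Aᶜ) :
    frontier A ∩ V = {y ∈ V | f y = 0} ∧ A ∩ V = {y ∈ V | 0 ≤ f y} := by
  have zeros_mem : ∀ y ∈ V, f y = 0 → y ∈ A := fun y hyV hy =>
    hA.closure_subset_iff.2 (hpos.trans interior_subset) (h.zeros_subset_closure_pos ⟨hyV, hy⟩)
  refine ⟨Set.ext fun y => ⟨fun ⟨hyA, hyV⟩ => ⟨hyV, ?_⟩, fun ⟨hyV, hy⟩ => ⟨?_, hyV⟩⟩,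
    Set.ext fun y => ⟨fun ⟨hyA, hyV⟩ => ⟨hyV, ?_⟩, fun ⟨hyV, hy⟩ => ⟨?_, hyV⟩⟩⟩
  · rcases lt_trichotomy (f y) 0 with hy | hy | hy
    · exact absurd (hA.frontier_subset hyA) (hneg ⟨hyV, hy⟩)
    · exact hy
    · exact absurd (hpos ⟨hyV, hy⟩) hyA.2
  · rw [frontier_eq_closure_inter_closure]
    exact ⟨subset_closure (zeros_mem y hyV hy),
      closure_mono hneg (h.zeros_subset_closure_neg ⟨hyV, hy⟩)⟩
  · exact not_lt.1 fun hy => hneg ⟨hyV, hy⟩ hyA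
  · rcases hy.lt_or_eq with hy | hy
    · exact interior_subset (hpos ⟨hyV, hy⟩)
    · exact zeros_mem y hyV hy.symm

theorem frontier_inter_eq_and_inter_eq_or (h : IsSignSplitting f V) (hA : IsClosed A) {x : X}
    (hx : x ∈ frontier (interior A)) (hxV : x ∈ V) (hfr : frontier A ∩ V ⊆ {y | f y = 0}) :
    frontier A ∩ V = {y ∈ V | f y = 0} ∧
      (A ∩ V = {y ∈ V | 0 ≤ f y} ∨ A ∩ V = {y ∈ V | f y ≤ 0}) := by
  have hdisj : ∀ S ⊆ {y ∈ V | f y ≠ 0}, Disjoint S (frontier A) := fun S hS =>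
    Set.disjoint_left.2 fun y hyS hyA => (hS hyS).2 (hfr ⟨hyA, (hS hyS).1⟩)
  have hnonzero : {y ∈ V | f y ≠ 0} = {y ∈ V | f y < 0} ∪ {y ∈ V | 0 < f y} := by
    ext y
    exact (and_congr_right fun _ => ne_iff_lt_or_gt).trans and_or_left
  rcases h.isPreconnected_pos.subset_interior_or_subset_compl hA
      (hdisj _ fun y hy => ⟨hy.1, hy.2.ne'⟩) with hp | hp <;>
    rcases h.isPreconnected_neg.subset_interior_or_subset_compl hA
      (hdisj _ fun y hy => ⟨hy.1, hy.2.ne⟩) with hn | hn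
  · have hVA : V ⊆ A := h.subset_closure_ne_zero.trans <|
      hA.closure_subset_iff.2 (hnonzero ▸ (union_subset hn hp).trans interior_subset)
    exact absurd (interior_maximal hVA h.isOpen hxV) (interior_interior (s := A) ▸ hx.2)
  · exact ⟨(h.frontier_inter_eq_and_inter_eq hA hp hn).1,
      .inl (h.frontier_inter_eq_and_inter_eq hA hp hn).2⟩
  · have hneg := h.neg.frontier_inter_eq_and_inter_eq hA
      (by simpa only [Pi.neg_apply, neg_pos] using hn)
      (by simpa only [Pi.neg_apply, neg_lt_zero] using hp)
    simp only [Pi.neg_apply, neg_eq_zero, neg_nonneg] at hneg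
    exact ⟨hneg.1, .inr hneg.2⟩
  · obtain ⟨a, haV, haA⟩ := _root_.mem_closure_iff.1 hx.1 V h.isOpen hxV
    obtain ⟨b, hbA, hb⟩ :=
      _root_.mem_closure_iff.1 (h.subset_closure_ne_zero haV) _ isOpen_interior haA
    exact ((hnonzero ▸ union_subset hn hp) hb (interior_subset hbA)).elim

theorem symm_image (e : OpenPartialHomeomorph X Y) {g : Y → ℝ} {B : Set Y}
    (hB : IsSignSplitting g B) (hBe : B ⊆ e.target) (hfg : ∀ p ∈ e.target, f (e.symm p) = g p) :
    IsSignSplitting f (e.symm '' B) := by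
  have hsets : ∀ P : ℝ → Prop, {y ∈ e.symm '' B | P (f y)} = e.symm '' {p ∈ B | P (g p)} := by
    intro P
    ext y
    constructor
    · rintro ⟨⟨p, hp, rfl⟩, hy⟩
      exact ⟨p, ⟨hp, hfg p (hBe hp) ▸ hy⟩, rfl⟩
    · rintro ⟨p, ⟨hp, hy⟩, rfl⟩
      exact ⟨⟨p, hp, rfl⟩, (hfg p (hBe hp)).symm ▸ hy⟩
  have hcont : ContinuousOn e.symm B := e.continuousOn_symm.mono hBe
  have hclosure : ∀ P : ℝ → Prop, {p ∈ B | g p = 0} ⊆ closure {p ∈ B | P (g p)} →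
      {y ∈ e.symm '' B | f y = 0} ⊆ closure {y ∈ e.symm '' B | P (f y)} := by
    rintro P hP _ ⟨⟨p, hp, rfl⟩, hy⟩
    rw [hsets P]
    exact (e.continuousAt_symm (hBe hp)).continuousWithinAt.mem_closure_image
      (hP ⟨hp, hfg p (hBe hp) ▸ hy⟩)
  exact ⟨e.isOpen_image_symm_of_subset_target hB.isOpen hBe,
    hsets (0 < ·) ▸ hB.isPreconnected_pos.image _ (hcont.mono fun _ hp => hp.1),
    hsets (· < 0) ▸ hB.isPreconnected_neg.image _ (hcont.mono fun _ hp => hp.1),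
    hclosure (0 < ·) hB.zeros_subset_closure_pos, hclosure (· < 0) hB.zeros_subset_closure_neg⟩

end IsSignSplitting

end Topology

theorem mem_closure_setOf_fst_of_frequently {K : Type*} [TopologicalSpace K] {s : Set (ℝ × K)}
    {p : ℝ × K} (hs : s ∈ 𝓝 p) (hp0 : p.1 = 0) {P : ℝ → Prop} (hP : ∃ᶠ t in 𝓝 0, P t) :
    p ∈ closure {q ∈ s | P q.1} := by
  have hlim : Tendsto (fun t : ℝ => (t, p.2)) (𝓝 0) (𝓝 p) :=
    (continuous_id.prodMk continuous_const).tendsto' 0 p (Prod.ext hp0.symm rfl)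
  rw [mem_closure_iff_frequently]
  exact hlim.frequently <| (hP.and_eventually (hlim.eventually hs)).mono
    fun _ ht => ⟨ht.2, ht.1⟩

theorem Convex.isSignSplitting_fst {K : Type*} [AddCommGroup K] [Module ℝ K] [TopologicalSpace K]
    [IsTopologicalAddGroup K] [ContinuousSMul ℝ K] {s : Set (ℝ × K)} (hconv : Convex ℝ s)
    (hs : IsOpen s) :
    IsSignSplitting Prod.fst s where
  isOpen := hs
  isPreconnected_pos :=
    (hconv.inter (convex_halfSpace_gt (LinearMap.fst ℝ ℝ K).isLinear 0)).isPreconnected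
  isPreconnected_neg :=
    (hconv.inter (convex_halfSpace_lt (LinearMap.fst ℝ ℝ K).isLinear 0)).isPreconnected
  zeros_subset_closure_pos := fun _ hp =>
    mem_closure_setOf_fst_of_frequently (hs.mem_nhds hp.1) hp.2 (frequently_gt_nhds 0)
  zeros_subset_closure_neg := fun _ hp =>
    mem_closure_setOf_fst_of_frequently (hs.mem_nhds hp.1) hp.2 (frequently_lt_nhds 0)

theorem HasStrictFDerivAt.exists_isSignSplitting {E : Type*} [NormedAddCommGroup E]
    [NormedSpace ℝ E] [CompleteSpace E] {f : E → ℝ} {f' : E →L[ℝ] ℝ} {x : E}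
    (hf : HasStrictFDerivAt f f' x) (hf' : f' ≠ 0) {U : Set E} (hU : U ∈ 𝓝 x) :
    ∃ V ⊆ U, x ∈ V ∧ IsSignSplitting f V := by
  have hrange : f'.range = ⊤ :=
    Module.Dual.range_eq_top_of_ne_zero (f := (f' : E →ₗ[ℝ] ℝ)) (by exact_mod_cast hf')
  set φ := hf.implicitToOpenPartialHomeomorph f f' hrange
  have hxφ : x ∈ φ.source := hf.mem_implicitToOpenPartialHomeomorph_source hrange
  have hφx : φ x ∈ φ.target ∩ φ.symm ⁻¹' interior U :=
    ⟨φ.map_source hxφ, by rw [mem_preimage, φ.left_inv hxφ]; exact mem_interior_iff_mem_nhds.2 hU⟩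
  obtain ⟨r, hr, hball⟩ :=
    Metric.isOpen_iff.1 (φ.isOpen_inter_preimage_symm isOpen_interior) (φ x) hφx
  refine ⟨φ.symm '' Metric.ball (φ x) r, ?_, ⟨φ x, Metric.mem_ball_self hr, φ.left_inv hxφ⟩, ?_⟩
  · rintro _ ⟨p, hp, rfl⟩
    exact interior_subset (hball hp).2
  · refine ((convex_ball _ _).isSignSplitting_fst Metric.isOpen_ball).symm_image φ
      (fun p hp => (hball hp).1) fun p hp => ?_
    rw [← hf.implicitToOpenPartialHomeomorph_fst hrange, φ.right_inv hp]

/-- If `A ⊆ ℝ^n` is closed, `x` lies in the frontier of the interior of `A`, `f` is a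
polynomial function with `∇f(x) ≠ 0`, and `frontier A ∩ U ⊆ {f = 0}` for some open
neighborhood `U` of `x`, then there is an open `V` with `x ∈ V ⊆ U` such that
`frontier A ∩ V = {y ∈ V : f(y) = 0}` and, up to replacing `f` by `−f`,
`A ∩ V = {y ∈ V : f(y) ≥ 0}`. -/
theorem stmt_10 {n : ℕ}
    (A : Set (EuclideanSpace ℝ (Fin n))) (hA : IsClosed A)
    (x : EuclideanSpace ℝ (Fin n)) (hx : x ∈ frontier (interior A))
    (P : MvPolynomial (Fin n) ℝ)
    (f : EuclideanSpace ℝ (Fin n) → ℝ)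
    (hf : f = fun y => MvPolynomial.eval (fun i => y i) P)
    (hgrad : ∇ f x ≠ 0)
    (U : Set (EuclideanSpace ℝ (Fin n))) (hU : IsOpen U) (hxU : x ∈ U)
    (hfrontier : frontier A ∩ U ⊆ {y | f y = 0}) :
    ∃ V : Set (EuclideanSpace ℝ (Fin n)), IsOpen V ∧ x ∈ V ∧ V ⊆ U ∧
      frontier A ∩ V = {y ∈ V | f y = 0} ∧
      (A ∩ V = {y ∈ V | 0 ≤ f y} ∨ A ∩ V = {y ∈ V | f y ≤ 0}) := by
  have hanalytic : AnalyticAt ℝ f x := by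
    subst hf
    exact AnalyticOnNhd.eval_continuousLinearMap
      (PiLp.continuousLinearEquiv 2 ℝ (fun _ : Fin n => ℝ)).toContinuousLinearMap P x trivial
  have hderiv : fderiv ℝ f x ≠ 0 := fun h => hgrad (by simp [gradient, h])
  obtain ⟨V, hVU, hxV, hV⟩ :=
    hanalytic.hasStrictFDerivAt.exists_isSignSplitting hderiv (hU.mem_nhds hxU)
  exact ⟨V, hV.isOpen, hxV, hVU, hV.frontier_inter_eq_and_inter_eq_or hA hx hxV
    fun y hy => hfrontier ⟨hy.1, hVU hy.2⟩⟩
end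

section
/- Let H be a symmetric real (n+1)×(n+1) matrix and x ∈ ℝ^{n+1} such that Hx ≠ 0, ⟪x, Hx⟫ = 0, and ⟪v, Hv⟫ ≤ 0 for every v ∈ ℝ^{n+1} with ⟪Hx, v⟫ = 0. Then the set W = {v ∈ ℝ^{n+1} : ⟪Hx, v⟫ = 0 and ⟪v, Hv⟫ = 0} is a linear subspace, equal to (ker H) + span{x}; its dimension satisfies dim W = dim ker H + 1, and dim W + rank H = n + 2. -/
/-!
On `T = (Hx)ᗮ` the form `v ↦ ⟪v, Hv⟫` is negative semidefinite, so an isotropic `v ∈ T` is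
`H`-orthogonal to all of `T`: the quadratic `t ↦ ⟪v + tw, H(v + tw)⟫` is `≤ 0` and vanishes at
`t = 0`, so it has no linear term. Hence the functional `⟪Hv, ·⟫` vanishes on the kernel of
`⟪Hx, ·⟫`, so `Hv = c • Hx` and `v - c • x ∈ ker H`. As `Hx ≠ 0`, `x ∉ ker H`, and rank–nullity
gives the dimension count.
-/

open Matrix

theorem LinearMap.exists_eq_smul_of_ker_le {K V : Type*} [Field K] [AddCommGroup V] [Module K V]
    {φ ψ : V →ₗ[K] K} (h : ker φ ≤ ker ψ) : ∃ c : K, ψ = c • φ := by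
  have := mem_span_of_iInf_ker_le_ker (L := fun _ : Unit => φ) (by simpa using h)
  simpa [Submodule.mem_span_singleton, eq_comm] using this

section OrderedField

variable {K V : Type*} [Field K] [LinearOrder K] [IsStrictOrderedRing K]
  [AddCommGroup V] [Module K V]

theorem eq_zero_of_forall_mul_sq_add_two_mul_nonpos {b c : K}
    (h : ∀ t : K, c * (t * t) + 2 * b * t ≤ 0) : b = 0 := by
  have hd := discrim_le_zero_of_nonpos (c := (0 : K)) (by simpa using h)
  rw [discrim] at hd
  nlinarith [sq_nonneg b]

namespace LinearMap.BilinForm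

variable {B : LinearMap.BilinForm K V}

theorem IsSymm.apply_eq_zero_of_isotropic_of_nonpos (hB : B.IsSymm) {T : Submodule K V}
    (hT : ∀ w ∈ T, B w w ≤ 0) {v w : V} (hv : v ∈ T) (hvv : B v v = 0) (hw : w ∈ T) :
    B v w = 0 := by
  refine eq_zero_of_forall_mul_sq_add_two_mul_nonpos (c := B w w) fun t => ?_
  have := hT (v + t • w) (T.add_mem hv (T.smul_mem t hw))
  simp only [map_add, map_smul, LinearMap.add_apply, LinearMap.smul_apply, smul_eq_mul,
    hvv, hB.eq w v] at this
  linarith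

theorem IsSymm.isotropic_orthogonal_eq_ker_sup_span (hB : B.IsSymm) {x : V} (hxx : B x x = 0)
    (hneg : ∀ v, B x v = 0 → B v v ≤ 0) :
    {v | B x v = 0 ∧ B v v = 0} = ↑(ker B ⊔ Submodule.span K {x}) := by
  ext v
  constructor
  · rintro ⟨hxv, hvv⟩
    obtain ⟨c, hc⟩ := exists_eq_smul_of_ker_le (φ := B x) (ψ := B v) fun w hw =>
      hB.apply_eq_zero_of_isotropic_of_nonpos (T := ker (B x)) hneg hxv hvv hw
    have hker : v - c • x ∈ ker B := by simp [hc]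
    simpa using Submodule.add_mem_sup hker
      (Submodule.smul_mem _ c (Submodule.mem_span_singleton_self x))
  · intro hv
    obtain ⟨k, hk, y, hy, rfl⟩ := Submodule.mem_sup.mp hv
    obtain ⟨c, rfl⟩ := Submodule.mem_span_singleton.mp hy
    rw [mem_ker] at hk
    simp [hk, hB.eq x k, hxx]

end LinearMap.BilinForm

end OrderedField

namespace Matrix

variable {ι : Type*} [Fintype ι]

theorem IsSymm.mulVec_dotProduct {R : Type*} [CommSemiring R] {H : Matrix ι ι R} (hH : H.IsSymm)
    (u w : ι → R) : H *ᵥ u ⬝ᵥ w = u ⬝ᵥ H *ᵥ w := by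
  rw [dotProduct_mulVec, ← hH.eq, vecMul_transpose, hH.eq]

theorem IsSymm.ker_toBilin' {R : Type*} [CommRing R] [DecidableEq ι] {H : Matrix ι ι R}
    (hH : H.IsSymm) :
    LinearMap.ker H.toBilin' = LinearMap.ker H.mulVecLin := by
  ext u
  simp only [LinearMap.mem_ker, mulVecLin_apply]
  constructor
  · intro h
    ext i
    have := LinearMap.congr_fun h (Pi.single i 1)
    rwa [toBilin'_apply', ← hH.mulVec_dotProduct, dotProduct_single, mul_one] at this
  · intro h
    refine LinearMap.ext fun w => ?_
    rw [toBilin'_apply', ← hH.mulVec_dotProduct, h, zero_dotProduct, LinearMap.zero_apply]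

theorem rank_add_finrank_ker {K : Type*} [Field K] (A : Matrix ι ι K) :
    A.rank + Module.finrank K (LinearMap.ker A.mulVecLin) = Fintype.card ι := by
  rw [rank, LinearMap.finrank_range_add_finrank_ker, Module.finrank_fintype_fun_eq_card]

end Matrix

/-- Linear-algebraic core of the theorem after Renegar: if `H` is symmetric, `Hx ≠ 0`,
`⟪x, Hx⟫ = 0`, and `⟪v, Hv⟫ ≤ 0` for all `v ⊥ Hx`, then
`W = {v : ⟪Hx, v⟫ = 0, ⟪v, Hv⟫ = 0}` is the linear subspace `ker H + span{x}`, of dimension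
`dim ker H + 1`, and `dim W + rank H = n + 2`. -/
theorem stmt_11 {n : ℕ}
    (H : Matrix (Fin (n + 1)) (Fin (n + 1)) ℝ) (hH : H.IsSymm)
    (x : Fin (n + 1) → ℝ)
    (hHx : H.mulVec x ≠ 0)
    (hxHx : x ⬝ᵥ H.mulVec x = 0)
    (hneg : ∀ v : Fin (n + 1) → ℝ, H.mulVec x ⬝ᵥ v = 0 → v ⬝ᵥ H.mulVec v ≤ 0) :
    {v : Fin (n + 1) → ℝ | H.mulVec x ⬝ᵥ v = 0 ∧ v ⬝ᵥ H.mulVec v = 0} =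
        ↑(LinearMap.ker H.mulVecLin ⊔ Submodule.span ℝ {x}) ∧
      Module.finrank ℝ ↥(LinearMap.ker H.mulVecLin ⊔ Submodule.span ℝ {x}) =
        Module.finrank ℝ ↥(LinearMap.ker H.mulVecLin) + 1 ∧
      Module.finrank ℝ ↥(LinearMap.ker H.mulVecLin ⊔ Submodule.span ℝ {x}) + H.rank = n + 2 := by
  have hB : H.toBilin'.IsSymm := isSymm_toBilin'_iff_isSymm.mpr hH
  have hform : ∀ u w, H *ᵥ u ⬝ᵥ w = H.toBilin' u w := fun u w => by
    rw [toBilin'_apply', hH.mulVec_dotProduct]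
  have hdim := Submodule.finrank_sup_span_singleton (p := LinearMap.ker H.mulVecLin) hHx
  refine ⟨?_, hdim, ?_⟩
  · simp only [hform, ← toBilin'_apply', ← hH.ker_toBilin']
    exact hB.isotropic_orthogonal_eq_ker_sup_span (by rwa [toBilin'_apply'])
      (by simpa only [hform, ← toBilin'_apply'] using hneg)
  · have := H.rank_add_finrank_ker
    rw [Fintype.card_fin] at this
    omega
end

section
/- Let H be a symmetric real (n+1)×(n+1) matrix and x ∈ ℝ^{n+1} such that Hx ≠ 0, ⟪x, Hx⟫ = 0, and ⟪v, Hv⟫ ≤ 0 for every v ∈ ℝ^{n+1} with ⟪Hx, v⟫ = 0. Then the maximal dimension of a linear subspace of ℝ^{n+1} on which the quadratic form v ↦ ⟪v, Hv⟫ is positive definite equals 1 (i.e., H has exactly one positive eigenvalue, counted with multiplicity). -/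
open Matrix Module

/-! For `u = Hx` the form `Q v = ⟪v, Hv⟫` satisfies `Q (a x + u) = 2a ⟪u, u⟫ + Q u`, because `x` is
isotropic and `⟪x, Hu⟫ = ⟪Hx, u⟫ = ⟪u, u⟫ > 0`; choosing `a` suitably makes this positive, so the
line through `a x + u` is a positive definite subspace. Conversely, any subspace of dimension at
least two meets the hyperplane `(Hx)^⊥` in a nonzero vector, on which `Q ≤ 0`. -/

variable {ι R : Type*} [Fintype ι]

section Field

variable [Field R]

theorem Matrix.IsSymm.dotProduct_mulVec_eq {H : Matrix ι ι R} (hH : H.IsSymm) (a b : ι → R) :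
    a ⬝ᵥ H *ᵥ b = H *ᵥ a ⬝ᵥ b := by
  rw [dotProduct_mulVec, ← mulVec_transpose, hH.eq]

theorem Matrix.smul_dotProduct_mulVec_smul (H : Matrix ι ι R) (a : R) (v : ι → R) :
    a • v ⬝ᵥ H *ᵥ (a • v) = a ^ 2 * (v ⬝ᵥ H *ᵥ v) := by
  simp only [mulVec_smul, dotProduct_smul, smul_dotProduct, smul_eq_mul]
  ring

theorem Matrix.IsSymm.quadForm_smul_add_mulVec {H : Matrix ι ι R} (hH : H.IsSymm) {x : ι → R}
    (hx : x ⬝ᵥ H *ᵥ x = 0) (a : R) :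
    (a • x + H *ᵥ x) ⬝ᵥ H *ᵥ (a • x + H *ᵥ x) =
      2 * a * (H *ᵥ x ⬝ᵥ H *ᵥ x) + H *ᵥ x ⬝ᵥ H *ᵥ (H *ᵥ x) := by
  have hcross : x ⬝ᵥ H *ᵥ (H *ᵥ x) = H *ᵥ x ⬝ᵥ H *ᵥ x := hH.dotProduct_mulVec_eq _ _
  simp only [mulVec_add, mulVec_smul, dotProduct_add, add_dotProduct, dotProduct_smul,
    smul_dotProduct, smul_eq_mul, hx, hcross]
  ring

theorem Submodule.exists_ne_zero_dotProduct_eq_zero {V : Submodule R (ι → R)}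
    (hV : 1 < finrank R V) (y : ι → R) : ∃ v ∈ V, v ≠ 0 ∧ y ⬝ᵥ v = 0 := by
  have hker : LinearMap.ker ((dotProductBilin R R y).domRestrict V) ≠ ⊥ :=
    LinearMap.ker_ne_bot_of_finrank_lt (by rwa [finrank_self])
  obtain ⟨⟨v, hvV⟩, hv, hv0⟩ := Submodule.exists_mem_ne_zero_of_ne_bot hker
  exact ⟨v, hvV, by simpa using hv0, hv⟩

end Field

section LinearOrderedField

variable [Field R] [LinearOrder R] [IsStrictOrderedRing R]

theorem Matrix.IsSymm.exists_dotProduct_mulVec_pos {H : Matrix ι ι R} (hH : H.IsSymm)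
    {x : ι → R} (hx : x ⬝ᵥ H *ᵥ x = 0) (hHx : H *ᵥ x ≠ 0) : ∃ v, 0 < v ⬝ᵥ H *ᵥ v := by
  set s := H *ᵥ x ⬝ᵥ H *ᵥ x
  set c := H *ᵥ x ⬝ᵥ H *ᵥ (H *ᵥ x)
  have hs : 0 < s :=
    lt_of_le_of_ne (Finset.sum_nonneg fun i _ => mul_self_nonneg _)
      (Ne.symm (dotProduct_self_eq_zero.not.mpr hHx))
  refine ⟨((s - c) / (2 * s)) • x + H *ᵥ x, ?_⟩
  have hval : 2 * ((s - c) / (2 * s)) * s + c = s := by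
    field_simp
    ring
  rwa [hH.quadForm_smul_add_mulVec hx, hval]

theorem Matrix.dotProduct_mulVec_pos_of_mem_span_singleton {H : Matrix ι ι R} {v : ι → R}
    (hv : 0 < v ⬝ᵥ H *ᵥ v) {w : ι → R} (hw : w ∈ Submodule.span R {v}) (hw0 : w ≠ 0) :
    0 < w ⬝ᵥ H *ᵥ w := by
  obtain ⟨a, rfl⟩ := Submodule.mem_span_singleton.mp hw
  have ha : a ≠ 0 := by rintro rfl; simp at hw0
  rw [smul_dotProduct_mulVec_smul]
  positivity

end LinearOrderedField

/-- If `H` is symmetric, `Hx ≠ 0`, `⟪x, Hx⟫ = 0`, and `⟪v, Hv⟫ ≤ 0` for all `v ⊥ Hx`, then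
the maximal dimension of a subspace on which `v ↦ ⟪v, Hv⟫` is positive definite equals `1`,
i.e. `H` has exactly one positive eigenvalue counted with multiplicity. -/
theorem stmt_12 {n : ℕ}
    (H : Matrix (Fin (n + 1)) (Fin (n + 1)) ℝ) (hH : H.IsSymm)
    (x : Fin (n + 1) → ℝ)
    (hHx : H.mulVec x ≠ 0)
    (hxHx : x ⬝ᵥ H.mulVec x = 0)
    (hneg : ∀ v : Fin (n + 1) → ℝ, H.mulVec x ⬝ᵥ v = 0 → v ⬝ᵥ H.mulVec v ≤ 0) :
    IsGreatest {d : ℕ | ∃ V : Submodule ℝ (Fin (n + 1) → ℝ),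
        Module.finrank ℝ ↥V = d ∧ ∀ v ∈ V, v ≠ 0 → 0 < v ⬝ᵥ H.mulVec v} 1 := by
  constructor
  · obtain ⟨v, hv⟩ := hH.exists_dotProduct_mulVec_pos hxHx hHx
    have hv0 : v ≠ 0 := by rintro rfl; simp at hv
    exact ⟨Submodule.span ℝ {v}, finrank_span_singleton hv0,
      fun w hw hw0 => dotProduct_mulVec_pos_of_mem_span_singleton hv hw hw0⟩
  · rintro d ⟨V, rfl, hpos⟩
    by_contra! hV
    obtain ⟨v, hvV, hv0, hvx⟩ := V.exists_ne_zero_dotProduct_eq_zero hV (H *ᵥ x)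
    exact (hneg v hvx).not_gt (hpos v hvV hv0)
end
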